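/- Let F be an integrable, positive random variable on a probability space with E[F] = F₀ > 0 and E[|ln F|] < ∞. Then ∫_{F₀}^∞ E[(F−k)⁺]/k² dk + ∫_0^{F₀} E[(k−F)⁺]/k² dk = ln(F₀) − E[ln F]. -/

import Mathlib

/-! For a fixed terminal value `x > 0`, both the call payoff `(x - k)⁺ / k²` integrated over
strikes `k > F₀` and the put payoff `(k - x)⁺ / k²` integrated over `0 < k ≤ F₀` reduce to
`∫ (k - x) / k² dk` between `F₀` and `x`, whose antiderivative is `x / k + log k`; their sum is
`x / F₀ - 1 + (log F₀ - log x)`. The integrands are nonnegative, so Tonelli exchanges the strike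
integral with the expectation, and taking expectations with `E[F] = F₀` leaves
`log F₀ - E[log F]`. -/

open Set MeasureTheory

theorem hasDerivAt_div_add_log (x : ℝ) {t : ℝ} (ht : 0 < t) :
    HasDerivAt (fun t => x / t + Real.log t) ((t - x) / t ^ 2) t := by
  have ht0 := ht.ne'
  have h := ((hasDerivAt_inv ht0).const_mul x).add (Real.hasDerivAt_log ht0)
  rwa [show x * -(t ^ 2)⁻¹ + t⁻¹ = (t - x) / t ^ 2 by field_simp; ring] at h

theorem setIntegral_Ioc_eq_div_add_log_sub {f : ℝ → ℝ} {x a b : ℝ} (ha : 0 < a) (hab : a ≤ b)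
    (hf : ContinuousOn f (Icc a b)) (hfx : ∀ k ∈ Ioo a b, f k = (k - x) / k ^ 2) :
    ∫ k in Ioc a b, f k = (x / b + Real.log b) - (x / a + Real.log a) := by
  rw [← intervalIntegral.integral_of_le hab]
  refine intervalIntegral.integral_eq_sub_of_hasDerivAt_of_le (f := fun t => x / t + Real.log t)
    hab ?_ ?_ (hf.intervalIntegrable_of_Icc hab)
  · exact fun k hk => (hasDerivAt_div_add_log x (ha.trans_le hk.1)).continuousAt.continuousWithinAt
  · intro k hk
    rw [hfx k hk]
    exact hasDerivAt_div_add_log x (ha.trans hk.1)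

theorem continuousOn_div_sq_Icc {p : ℝ → ℝ} (hp : Continuous p) {a b : ℝ} (ha : 0 < a) :
    ContinuousOn (fun k => p k / k ^ 2) (Icc a b) :=
  hp.continuousOn.div (by fun_prop) fun k hk => pow_ne_zero 2 (ha.trans_le hk.1).ne'

theorem call_eq_zero_of_notMem {F₀ x k : ℝ} (hk : k ∈ Ioi F₀ \ Ioc F₀ (max x F₀)) :
    max (x - k) 0 / k ^ 2 = 0 := by
  have : x < k := (le_max_left x F₀).trans_lt (not_le.1 fun h => hk.2 ⟨hk.1, h⟩)
  rw [max_eq_right (by linarith), zero_div]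

theorem integrableOn_Ioi_call {F₀ : ℝ} (hF₀ : 0 < F₀) (x : ℝ) :
    IntegrableOn (fun k => max (x - k) 0 / k ^ 2) (Ioi F₀) :=
  (continuousOn_div_sq_Icc (by fun_prop) hF₀).integrableOn_Icc.mono_set Ioc_subset_Icc_self
    |>.of_forall_sdiff_eq_zero measurableSet_Ioi fun _ => call_eq_zero_of_notMem

theorem setIntegral_Ioi_call {F₀ : ℝ} (hF₀ : 0 < F₀) (x : ℝ) :
    ∫ k in Ioi F₀, max (x - k) 0 / k ^ 2
      = (x / F₀ + Real.log F₀) - (x / max x F₀ + Real.log (max x F₀)) := by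
  rw [setIntegral_eq_of_subset_of_forall_sdiff_eq_zero measurableSet_Ioi Ioc_subset_Ioi_self
    fun _ => call_eq_zero_of_notMem, ← neg_sub, ← neg_neg (∫ k in _, _), ← integral_neg]
  congr 1
  refine setIntegral_Ioc_eq_div_add_log_sub hF₀ (le_max_right x F₀)
    (continuousOn_div_sq_Icc (by fun_prop) hF₀).neg fun k hk => ?_
  have : k < x := lt_max_iff.1 hk.2 |>.resolve_right hk.1.not_gt
  rw [max_eq_left (by linarith), ← neg_div, neg_sub]

theorem put_eq_zero_of_notMem {F₀ x k : ℝ} (hk : k ∈ Ioc 0 F₀ \ Ioc (min x F₀) F₀) :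
    max (k - x) 0 / k ^ 2 = 0 := by
  have : k ≤ x := (not_lt.1 fun h => hk.2 ⟨h, hk.1.2⟩).trans (min_le_left x F₀)
  rw [max_eq_right (by linarith), zero_div]

theorem integrableOn_Ioc_put {F₀ x : ℝ} (hx : 0 < x) (hF₀ : 0 < F₀) :
    IntegrableOn (fun k => max (k - x) 0 / k ^ 2) (Ioc 0 F₀) :=
  (continuousOn_div_sq_Icc (by fun_prop) (lt_min hx hF₀)).integrableOn_Icc.mono_set
    Ioc_subset_Icc_self |>.of_forall_sdiff_eq_zero measurableSet_Ioc fun _ => put_eq_zero_of_notMem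

theorem setIntegral_Ioc_put {F₀ x : ℝ} (hx : 0 < x) (hF₀ : 0 < F₀) :
    ∫ k in Ioc 0 F₀, max (k - x) 0 / k ^ 2
      = (x / F₀ + Real.log F₀) - (x / min x F₀ + Real.log (min x F₀)) := by
  rw [setIntegral_eq_of_subset_of_forall_sdiff_eq_zero measurableSet_Ioc
    (Ioc_subset_Ioc_left (lt_min hx hF₀).le) fun _ => put_eq_zero_of_notMem]
  refine setIntegral_Ioc_eq_div_add_log_sub (lt_min hx hF₀) (min_le_right x F₀)
    (continuousOn_div_sq_Icc (by fun_prop) (lt_min hx hF₀)) fun k hk => ?_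
  have : x < k := min_lt_iff.1 hk.1 |>.resolve_right hk.2.not_gt
  rw [max_eq_left (by linarith)]

theorem setIntegral_call_add_setIntegral_put {F₀ x : ℝ} (hx : 0 < x) (hF₀ : 0 < F₀) :
    (∫ k in Ioi F₀, max (x - k) 0 / k ^ 2) + ∫ k in Ioc 0 F₀, max (k - x) 0 / k ^ 2
      = x / F₀ - 1 + (Real.log F₀ - Real.log x) := by
  rw [setIntegral_Ioi_call hF₀, setIntegral_Ioc_put hx hF₀]
  rcases le_total x F₀ with h | h
  · rw [max_eq_right h, min_eq_left h, div_self hx.ne']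
    ring
  · rw [max_eq_left h, min_eq_right h, div_self hx.ne']
    ring

section Swap

variable {Ω : Type*} [MeasurableSpace Ω] {μ : Measure Ω} {F : Ω → ℝ} {p : ℝ → ℝ → ℝ} {s : Set ℝ}

theorem aemeasurable_comp_fst_div_sq (hF : AEMeasurable F μ) (hp : Measurable (Function.uncurry p))
    (ν : Measure ℝ) : AEMeasurable (fun q : Ω × ℝ => p (F q.1) q.2 / q.2 ^ 2) (μ.prod ν) :=
  (hp.comp_aemeasurable ((hF.comp_fst (ν := ν)).prodMk measurable_snd.aemeasurable)).div
    (measurable_snd.aemeasurable.pow_const 2)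

theorem integrable_setIntegral_div_sq [SFinite μ] (hF : AEMeasurable F μ)
    (hp : Measurable (Function.uncurry p)) (hp0 : ∀ x k, 0 ≤ p x k) {G : Ω → ℝ}
    (hG : Integrable G μ) (hbound : ∀ᵐ ω ∂μ, ∫ k in s, p (F ω) k / k ^ 2 ≤ G ω) :
    Integrable (fun ω => ∫ k in s, p (F ω) k / k ^ 2) μ := by
  refine hG.mono'
    (aemeasurable_comp_fst_div_sq hF hp _).aestronglyMeasurable.integral_prod_right' ?_
  filter_upwards [hbound] with ω hω
  rwa [Real.norm_of_nonneg (integral_nonneg fun k => div_nonneg (hp0 _ _) (sq_nonneg k))]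

theorem setIntegral_integral_div_sq_comm [SFinite μ] (hF : AEMeasurable F μ)
    (hp : Measurable (Function.uncurry p)) (hp0 : ∀ x k, 0 ≤ p x k)
    (hsec : ∀ᵐ ω ∂μ, IntegrableOn (fun k => p (F ω) k / k ^ 2) s)
    (hint : Integrable (fun ω => ∫ k in s, p (F ω) k / k ^ 2) μ) :
    ∫ k in s, (∫ ω, p (F ω) k ∂μ) / k ^ 2 = ∫ ω, (∫ k in s, p (F ω) k / k ^ 2) ∂μ := by
  have hmeas := (aemeasurable_comp_fst_div_sq hF hp (volume.restrict s)).aestronglyMeasurable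
  simp_rw [← integral_div]
  refine (integral_integral_swap ((integrable_prod_iff hmeas).2 ⟨hsec, ?_⟩)).symm
  simpa only [Real.norm_of_nonneg (div_nonneg (hp0 _ _) (sq_nonneg _))] using hint

end Swap

/-- Static replication identity: for an integrable positive random variable `F`
with mean `F₀ > 0` and integrable logarithm, the VIX-type weighted integral of
out-of-the-money call prices above `F₀` and put prices below `F₀` equals
`ln F₀ − E[ln F]`. -/
theorem stmt_2 {Ω : Type*} [MeasurableSpace Ω] (μ : Measure Ω) [IsProbabilityMeasure μ]
    (F : Ω → ℝ) (hFpos : ∀ᵐ ω ∂μ, 0 < F ω) (hFint : Integrable F μ)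
    (hlog : Integrable (fun ω => |Real.log (F ω)|) μ)
    (F₀ : ℝ) (hF₀ : F₀ = ∫ ω, F ω ∂μ) (hF₀pos : 0 < F₀) :
    (∫ k in Ioi F₀, (∫ ω, max (F ω - k) 0 ∂μ) / k ^ 2)
      + (∫ k in Ioc 0 F₀, (∫ ω, max (k - F ω) 0 ∂μ) / k ^ 2)
      = Real.log F₀ - ∫ ω, Real.log (F ω) ∂μ := by
  have hFm := hFint.aemeasurable
  have hlogF : Integrable (fun ω => Real.log (F ω)) μ :=
    (integrable_norm_iff hFm.log.aestronglyMeasurable).1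
      (by simpa only [Real.norm_eq_abs] using hlog)
  set G := fun ω => F ω / F₀ - 1 + (Real.log F₀ - Real.log (F ω))
  have hG : Integrable G μ :=
    ((hFint.div_const F₀).sub (integrable_const 1)).add ((integrable_const _).sub hlogF)
  have hsum : ∀ᵐ ω ∂μ, (∫ k in Ioi F₀, max (F ω - k) 0 / k ^ 2)
      + ∫ k in Ioc 0 F₀, max (k - F ω) 0 / k ^ 2 = G ω := by
    filter_upwards [hFpos] with ω hω using setIntegral_call_add_setIntegral_put hω hF₀pos
  have hcall := integrable_setIntegral_div_sq hFm (p := fun x k => max (x - k) 0) (by fun_prop)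
    (fun _ _ => le_max_right _ _) hG (by
      filter_upwards [hsum] with ω hω using
        hω ▸ le_add_of_nonneg_right (setIntegral_nonneg measurableSet_Ioc fun _ _ => by positivity))
  have hput := integrable_setIntegral_div_sq hFm (p := fun x k => max (k - x) 0) (by fun_prop)
    (fun _ _ => le_max_right _ _) hG (by
      filter_upwards [hsum] with ω hω using
        hω ▸ le_add_of_nonneg_left (setIntegral_nonneg measurableSet_Ioi fun _ _ => by positivity))
  rw [setIntegral_integral_div_sq_comm hFm (p := fun x k => max (x - k) 0) (by fun_prop)
      (fun _ _ => le_max_right _ _) (ae_of_all _ fun ω => integrableOn_Ioi_call hF₀pos _) hcall,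
    setIntegral_integral_div_sq_comm hFm (p := fun x k => max (k - x) 0) (by fun_prop)
      (fun _ _ => le_max_right _ _) (hFpos.mono fun ω hω => integrableOn_Ioc_put hω hF₀pos) hput,
    ← integral_add hcall hput, integral_congr_ae hsum, integral_add (by fun_prop) (by fun_prop),
    integral_sub (by fun_prop) (by fun_prop), integral_sub (by fun_prop) hlogF,
    integral_div, ← hF₀, div_self hF₀pos.ne']
  simp
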